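/- Let 1 < p < ∞ and 0 < s < 1, and let f ∈ H^∞ be the symbol of a bounded multiplication operator M_f on 𝒬^p_s(𝔻). If λ ∉ closure(f(𝔻)), then g = 1/(f − λ) is also a pointwise multiplier of 𝒬^p_s(𝔻); in particular, for every h ∈ 𝒬^p_s(𝔻) and all a ∈ 𝔻, ∫_𝔻 |g'(z) h(z)|^p (1−|z|)^{p−2} (1−|σ_a(z)|)^s dA(z) ≤ C ( ‖fh‖^p_{𝒬^p_s(𝔻)} + ‖f‖^p_{H^∞} ‖h‖^p_{𝒬^p_s(𝔻)} ) with C independent of a and h. -/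

import Mathlib

open Complex Real MeasureTheory

/-- The Möbius transformation σ_a(z) = (a - z)/(1 - ā z). -/
noncomputable def moebius (a z : ℂ) : ℂ := (a - z) / (1 - (starRingEnd ℂ) a * z)

/-- The p-th power of the 𝒬^p_s(𝔻) seminorm:
sup_{a∈𝔻} ∫_𝔻 |h'(z)|^p (1-|z|²)^{p-2} (1-|σ_a(z)|²)^s dA(z). -/
noncomputable def qSem (p s : ℝ) (h : ℂ → ℂ) : ENNReal :=
  ⨆ a ∈ Metric.ball (0 : ℂ) 1, ∫⁻ z in Metric.ball (0 : ℂ) 1,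
    ENNReal.ofReal (‖deriv h z‖ ^ p * (1 - ‖z‖ ^ 2) ^ (p - 2) *
      (1 - ‖moebius a z‖ ^ 2) ^ s)

section aux
lemma moebius_norm_lt_one {a z : ℂ} (ha : ‖a‖ < 1) (hz : ‖z‖ < 1) :
    ‖moebius a z‖ < 1 := by
  have ha2 : Complex.normSq a < 1 := by
    have h2 : ‖a‖ ^ 2 < 1 := by nlinarith [norm_nonneg a]
    rw [← Complex.sq_norm]; exact h2
  have hz2 : Complex.normSq z < 1 := by
    have h2 : ‖z‖ ^ 2 < 1 := by nlinarith [norm_nonneg z]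
    rw [← Complex.sq_norm]; exact h2
  have key : Complex.normSq (a - z) < Complex.normSq (1 - (starRingEnd ℂ) a * z) := by
    simp only [Complex.normSq_apply, Complex.sub_re, Complex.sub_im, Complex.mul_re,
      Complex.mul_im, Complex.conj_re, Complex.conj_im, Complex.one_re, Complex.one_im,
      Complex.normSq_apply] at *
    nlinarith [sq_nonneg (a.re - z.re), sq_nonneg (a.im - z.im)]
  have key' : ‖a - z‖ < ‖1 - (starRingEnd ℂ) a * z‖ := by
    have e1 : ‖a - z‖ ^ 2 = Complex.normSq (a - z) := by
      rw [Complex.sq_norm]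
    have e2 : ‖1 - (starRingEnd ℂ) a * z‖ ^ 2 = Complex.normSq (1 - (starRingEnd ℂ) a * z) := by
      rw [Complex.sq_norm]
    have : ‖a - z‖ ^ 2 < ‖1 - (starRingEnd ℂ) a * z‖ ^ 2 := by rw [e1, e2]; exact key
    exact lt_of_pow_lt_pow_left₀ 2 (norm_nonneg _) this
  rw [moebius, norm_div]
  exact div_lt_one (lt_of_le_of_lt (norm_nonneg _) key') |>.mpr key'

lemma rpow_add_le {p A B : ℝ} (hp : 1 ≤ p) (hA : 0 ≤ A) (hB : 0 ≤ B) :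
    (A + B) ^ p ≤ 2 ^ p * (A ^ p + B ^ p) := by
  have hmax : 0 ≤ max A B := le_trans hA (le_max_left _ _)
  have h1 : A + B ≤ 2 * max A B := by
    rcases le_total A B with h | h
    · nlinarith [le_max_left A B, le_max_right A B]
    · nlinarith [le_max_left A B, le_max_right A B]
  calc (A + B) ^ p ≤ (2 * max A B) ^ p :=
        Real.rpow_le_rpow (by positivity) h1 (by linarith)
    _ = 2 ^ p * (max A B) ^ p := Real.mul_rpow (by norm_num) hmax
    _ ≤ 2 ^ p * (A ^ p + B ^ p) := by
        apply mul_le_mul_of_nonneg_left _ (by positivity)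
        rcases le_total A B with h | h
        · rw [max_eq_right h]; nlinarith [Real.rpow_nonneg hA p]
        · rw [max_eq_left h]; nlinarith [Real.rpow_nonneg hB p]

lemma weight1 {p x : ℝ} (hp : 1 < p) (hx0 : 0 ≤ x) (hx1 : x < 1) :
    (1 - x) ^ (p - 2) ≤ 2 * (1 - x ^ 2) ^ (p - 2) := by
  set u := 1 - x with hu
  set v := 1 - x ^ 2 with hv
  have hupos : 0 < u := by rw [hu]; linarith
  have hvpos : 0 < v := by rw [hv]; nlinarith
  have huv : u ≤ v := by rw [hu, hv]; nlinarith
  have hv2u : v ≤ 2 * u := by rw [hu, hv]; nlinarith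
  rcases le_or_gt 2 p with h2p | h2p
  · have h : u ^ (p - 2) ≤ v ^ (p - 2) := Real.rpow_le_rpow hupos.le huv (by linarith)
    have := Real.rpow_nonneg hvpos.le (p - 2)
    linarith
  · set q := 2 - p with hq
    have hq0 : 0 < q := by rw [hq]; linarith
    have hq1 : q ≤ 1 := by rw [hq]; linarith
    have e1 : u ^ (p - 2) = (u ^ q)⁻¹ := by
      rw [show p - 2 = -q by rw [hq]; ring, Real.rpow_neg hupos.le]
    have e2 : v ^ (p - 2) = (v ^ q)⁻¹ := by
      rw [show p - 2 = -q by rw [hq]; ring, Real.rpow_neg hvpos.le]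
    have hu1 : 0 < u ^ q := Real.rpow_pos_of_pos hupos _
    have hv1 : 0 < v ^ q := Real.rpow_pos_of_pos hvpos _
    have key : v ^ q ≤ 2 * u ^ q := by
      calc v ^ q ≤ (2 * u) ^ q := Real.rpow_le_rpow hvpos.le hv2u hq0.le
        _ = 2 ^ q * u ^ q := Real.mul_rpow (by norm_num) hupos.le
        _ ≤ 2 * u ^ q := by
            have h21 : (2:ℝ) ^ q ≤ 2 ^ (1:ℝ) :=
              Real.rpow_le_rpow_of_exponent_le (by norm_num) hq1
            rw [Real.rpow_one] at h21
            nlinarith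
    rw [e1, e2, inv_eq_one_div, inv_eq_one_div]
    have hd : 1 / u ^ q ≤ 2 / v ^ q := by
      rw [div_le_div_iff₀ hu1 hv1]; nlinarith
    rw [div_eq_mul_one_div 2 (v ^ q)] at hd
    exact hd

lemma measurable_rpow_const (c : ℝ) : Measurable fun x : ℝ => x ^ c := by
  have heq : (fun x : ℝ => x ^ c) = fun x =>
      if x = 0 then (if c = 0 then 1 else 0)
      else Real.exp (Real.log x * c) * (if x < 0 then Real.cos (c * π) else 1) := by
    funext x
    rcases lt_trichotomy x 0 with h | h | h
    · rw [Real.rpow_def_of_neg h]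
      simp [h.ne, h, mul_comm c π]
    · simp [h, Real.rpow_def_of_nonneg le_rfl]
    · rw [Real.rpow_def_of_pos h]
      simp [h.ne', not_lt.mpr h.le]
  rw [heq]
  apply Measurable.ite (measurableSet_eq_fun measurable_id measurable_const) measurable_const
  apply Measurable.mul ((Real.measurable_log.mul measurable_const).exp)
  exact Measurable.ite (measurableSet_lt measurable_id measurable_const) measurable_const
    measurable_const

lemma meas_integrand (F : ℂ → ℂ) (a : ℂ) (p s : ℝ) :
    Measurable fun z => ENNReal.ofReal (‖deriv F z‖ ^ p * (1 - ‖z‖ ^ 2) ^ (p - 2) *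
      (1 - ‖moebius a z‖ ^ 2) ^ s) := by
  have h1 : Measurable fun z : ℂ => ‖deriv F z‖ ^ p :=
    (measurable_rpow_const p).comp (measurable_deriv F).norm
  have h2 : Measurable fun z : ℂ => (1 - ‖z‖ ^ 2) ^ (p - 2) :=
    (measurable_rpow_const (p - 2)).comp
      (measurable_const.sub (measurable_norm.pow measurable_const))
  have hm : Measurable fun z : ℂ => moebius a z := by
    unfold moebius
    exact (measurable_const.sub measurable_id).div
      (measurable_const.sub (measurable_const.mul measurable_id))
  have h3 : Measurable fun z : ℂ => (1 - ‖moebius a z‖ ^ 2) ^ s :=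
    (measurable_rpow_const s).comp (measurable_const.sub (hm.norm.pow measurable_const))
  exact ENNReal.measurable_ofReal.comp ((h1.mul h2).mul h3)

lemma core_est {p : ℝ} (hp : 1 < p) {X A B K M W2 W3 w2 w3 : ℝ}
    (hA : 0 ≤ A) (hB : 0 ≤ B) (hK : 0 ≤ K) (hM : 0 ≤ M)
    (hW2 : 0 ≤ W2) (hW3 : 0 ≤ W3) (hw2 : 0 ≤ w2) (hw3 : 0 ≤ w3)
    (h1 : X ≤ K * (A + M * B)) (hX : 0 ≤ X) (h2 : W2 ≤ 2 * w2) (h3 : W3 ≤ w3) :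
    ENNReal.ofReal (X ^ p * W2 * W3) ≤ ENNReal.ofReal (K ^ p * 2 ^ p * 2) *
      (ENNReal.ofReal (A ^ p * w2 * w3) +
        ENNReal.ofReal (M ^ p) * ENNReal.ofReal (B ^ p * w2 * w3)) := by
  have hAp : 0 ≤ A ^ p := Real.rpow_nonneg hA p
  have hBp : 0 ≤ B ^ p := Real.rpow_nonneg hB p
  have hKp : 0 ≤ K ^ p := Real.rpow_nonneg hK p
  have hMp : 0 ≤ M ^ p := Real.rpow_nonneg hM p
  have h2p : (0:ℝ) ≤ 2 ^ p := Real.rpow_nonneg (by norm_num) p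
  have t1 : X ^ p ≤ K ^ p * 2 ^ p * (A ^ p + M ^ p * B ^ p) := by
    have k2 : X ^ p ≤ (K * (A + M * B)) ^ p :=
      Real.rpow_le_rpow hX h1 (by linarith)
    have k3 : (K * (A + M * B)) ^ p = K ^ p * (A + M * B) ^ p :=
      Real.mul_rpow hK (by positivity)
    have k4 : (A + M * B) ^ p ≤ 2 ^ p * (A ^ p + (M * B) ^ p) :=
      rpow_add_le hp.le hA (by positivity)
    have k5 : (M * B) ^ p = M ^ p * B ^ p := Real.mul_rpow hM hB
    rw [k5] at k4
    calc X ^ p ≤ (K * (A + M * B)) ^ p := k2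
      _ = K ^ p * (A + M * B) ^ p := k3
      _ ≤ K ^ p * (2 ^ p * (A ^ p + M ^ p * B ^ p)) :=
          mul_le_mul_of_nonneg_left k4 hKp
      _ = K ^ p * 2 ^ p * (A ^ p + M ^ p * B ^ p) := by ring
  have hXp : 0 ≤ X ^ p := Real.rpow_nonneg hX p
  have treal : X ^ p * W2 * W3 ≤
      (K ^ p * 2 ^ p * 2) * (A ^ p * w2 * w3 + M ^ p * (B ^ p * w2 * w3)) := by
    have step : X ^ p * W2 * W3 ≤
        (K ^ p * 2 ^ p * (A ^ p + M ^ p * B ^ p)) * (2 * w2) * w3 := by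
      apply mul_le_mul _ h3 hW3 (by positivity)
      apply mul_le_mul t1 h2 hW2 (by positivity)
    refine step.trans_eq ?_
    ring
  refine (ENNReal.ofReal_le_ofReal treal).trans ?_
  rw [ENNReal.ofReal_mul (by positivity),
    ENNReal.ofReal_add (by positivity) (by positivity),
    ENNReal.ofReal_mul hMp]

end aux

/-- if f ∈ H^∞ is the symbol of a bounded multiplication operator
on 𝒬^p_s(𝔻) and λ ∉ closure(f(𝔻)), then g = 1/(f - λ) is also a multiplier of
𝒬^p_s(𝔻); in particular for every h ∈ 𝒬^p_s(𝔻) and all a ∈ 𝔻,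
∫_𝔻 |g'(z)h(z)|^p (1-|z|)^{p-2} (1-|σ_a(z)|)^s dA(z)
  ≤ C (‖fh‖_{𝒬^p_s}^p + ‖f‖_{H^∞}^p ‖h‖_{𝒬^p_s}^p), with C independent of a, h. -/
theorem stmt_18 (p s : ℝ) (hp : 1 < p) (hs0 : 0 < s) (hs1 : s < 1)
    (f : ℂ → ℂ) (hf : DifferentiableOn ℂ f (Metric.ball 0 1))
    (Mf : ℝ) (hMf : ∀ z ∈ Metric.ball (0 : ℂ) 1, ‖f z‖ ≤ Mf)
    (hmult : ∀ h : ℂ → ℂ, DifferentiableOn ℂ h (Metric.ball 0 1) →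
      qSem p s h < ⊤ → qSem p s (fun z => f z * h z) < ⊤)
    (lam : ℂ) (hlam : lam ∉ closure (f '' Metric.ball 0 1)) :
    (∀ h : ℂ → ℂ, DifferentiableOn ℂ h (Metric.ball 0 1) → qSem p s h < ⊤ →
        qSem p s (fun z => (f z - lam)⁻¹ * h z) < ⊤) ∧
    ∃ C : ℝ, 0 < C ∧ ∀ h : ℂ → ℂ, DifferentiableOn ℂ h (Metric.ball 0 1) →
      qSem p s h < ⊤ → ∀ a : ℂ, ‖a‖ < 1 →
        (∫⁻ z in Metric.ball (0 : ℂ) 1,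
          ENNReal.ofReal (‖deriv (fun w => (f w - lam)⁻¹) z * h z‖ ^ p *
            (1 - ‖z‖) ^ (p - 2) * (1 - ‖moebius a z‖) ^ s))
        ≤ ENNReal.ofReal C *
            (qSem p s (fun z => f z * h z) + ENNReal.ofReal (Mf ^ p) * qSem p s h) := by
  have hball0 : (0:ℂ) ∈ Metric.ball (0:ℂ) 1 := by simp
  have hMf0 : 0 ≤ Mf := le_trans (norm_nonneg _) (hMf 0 hball0)
  rw [Metric.mem_closure_iff] at hlam
  push_neg at hlam
  obtain ⟨δ, hδ0, hδ⟩ := hlam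
  have hδf : ∀ z ∈ Metric.ball (0:ℂ) 1, δ ≤ ‖f z - lam‖ := by
    intro z hz
    have := hδ (f z) ⟨z, hz, rfl⟩
    rwa [dist_eq_norm, norm_sub_rev] at this
  have hne : ∀ z ∈ Metric.ball (0:ℂ) 1, f z - lam ≠ 0 := by
    intro z hz h0
    have := hδf z hz
    rw [h0, norm_zero] at this
    linarith
  have hfd : ∀ z ∈ Metric.ball (0:ℂ) 1, DifferentiableAt ℂ f z := fun z hz =>
    hf.differentiableAt (Metric.isOpen_ball.mem_nhds hz)
  have hgda : ∀ z ∈ Metric.ball (0:ℂ) 1,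
      DifferentiableAt ℂ (fun w => (f w - lam)⁻¹) z := fun z hz =>
    (((hfd z hz).sub_const lam).inv (hne z hz))
  have hgd : ∀ z ∈ Metric.ball (0:ℂ) 1,
      deriv (fun w => (f w - lam)⁻¹) z = -deriv f z / (f z - lam) ^ 2 := by
    intro z hz
    rw [deriv_fun_inv'' ((hfd z hz).sub_const lam) (hne z hz), deriv_sub_const]
  -- pointwise bound on ‖g' h‖
  have key : ∀ (h : ℂ → ℂ), DifferentiableOn ℂ h (Metric.ball 0 1) →
      ∀ z ∈ Metric.ball (0:ℂ) 1,
      ‖deriv (fun w => (f w - lam)⁻¹) z * h z‖ ≤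
        (δ⁻¹ * δ⁻¹) * (‖deriv (fun w => f w * h w) z‖ + Mf * ‖deriv h z‖) := by
    intro h hh z hz
    have hhd : DifferentiableAt ℂ h z := hh.differentiableAt (Metric.isOpen_ball.mem_nhds hz)
    have hd : deriv (fun w => f w * h w) z = deriv f z * h z + f z * deriv h z :=
      deriv_mul (hfd z hz) hhd
    have hB : ((f z - lam) ^ 2) ≠ 0 := pow_ne_zero _ (hne z hz)
    have e : deriv (fun w => (f w - lam)⁻¹) z * h z =
        -((deriv (fun w => f w * h w) z - f z * deriv h z) / (f z - lam) ^ 2) := by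
      rw [hgd z hz, hd]
      field_simp
      ring
    rw [e, norm_neg, norm_div, norm_pow]
    have hnum : ‖deriv (fun w => f w * h w) z - f z * deriv h z‖ ≤
        ‖deriv (fun w => f w * h w) z‖ + Mf * ‖deriv h z‖ := by
      refine le_trans (norm_sub_le _ _) ?_
      have : ‖f z * deriv h z‖ ≤ Mf * ‖deriv h z‖ := by
        rw [norm_mul]
        exact mul_le_mul_of_nonneg_right (hMf z hz) (norm_nonneg _)
      linarith
    have hden : δ * δ ≤ ‖f z - lam‖ ^ 2 := by
      have := hδf z hz
      nlinarith
    calc ‖deriv (fun w => f w * h w) z - f z * deriv h z‖ / ‖f z - lam‖ ^ 2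
        ≤ (‖deriv (fun w => f w * h w) z‖ + Mf * ‖deriv h z‖) / (δ * δ) := by
          apply div_le_div₀ (by positivity) hnum (by positivity) hden
      _ = (δ⁻¹ * δ⁻¹) * (‖deriv (fun w => f w * h w) z‖ + Mf * ‖deriv h z‖) := by
          rw [div_eq_mul_inv, mul_inv, mul_comm]
  set c0 : ℝ := δ⁻¹ * δ⁻¹ with hc0
  have hc0pos : 0 < c0 := by positivity
  -- integral ≤ qSem
  have hle : ∀ (F : ℂ → ℂ) (a : ℂ), ‖a‖ < 1 →
      (∫⁻ z in Metric.ball (0:ℂ) 1,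
        ENNReal.ofReal (‖deriv F z‖ ^ p * (1 - ‖z‖ ^ 2) ^ (p - 2) *
          (1 - ‖moebius a z‖ ^ 2) ^ s)) ≤ qSem p s F := by
    intro F a ha
    simp only [qSem]
    exact le_biSup
      (fun a : ℂ => ∫⁻ z in Metric.ball (0:ℂ) 1,
        ENNReal.ofReal (‖deriv F z‖ ^ p * (1 - ‖z‖ ^ 2) ^ (p - 2) *
          (1 - ‖moebius a z‖ ^ 2) ^ s))
      (mem_ball_zero_iff.mpr ha)
  -- nonnegativity facts for weights
  have hw2 : ∀ z : ℂ, z ∈ Metric.ball (0:ℂ) 1 → (0:ℝ) ≤ (1 - ‖z‖ ^ 2) ^ (p - 2) := by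
    intro z hz
    have := mem_ball_zero_iff.mp hz
    exact Real.rpow_nonneg (by nlinarith [norm_nonneg z]) _
  have hw3 : ∀ a z : ℂ, ‖a‖ < 1 → z ∈ Metric.ball (0:ℂ) 1 →
      (0:ℝ) ≤ (1 - ‖moebius a z‖ ^ 2) ^ s := by
    intro a z ha hz
    have hm := moebius_norm_lt_one ha (mem_ball_zero_iff.mp hz)
    exact Real.rpow_nonneg (by nlinarith [norm_nonneg (moebius a z)]) _
  constructor
  · -- Part 1: g·h is in the space
    intro h hh hq
    have hfh : qSem p s (fun z => f z * h z) < ⊤ := hmult h hh hq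
    set K1 : ℝ := c0 + c0 * Mf + δ⁻¹ with hK1
    have hK1pos : 0 < K1 := by positivity
    have hbound : qSem p s (fun z => (f z - lam)⁻¹ * h z) ≤
        ENNReal.ofReal (K1 ^ p * 2 ^ p * 2) *
          (qSem p s (fun z => f z * h z) + qSem p s h) := by
      simp only [qSem]
      apply iSup₂_le
      intro a ha
      have ha' : ‖a‖ < 1 := mem_ball_zero_iff.mp ha
      have hcore : ∀ z ∈ Metric.ball (0:ℂ) 1,
          ENNReal.ofReal (‖deriv (fun z => (f z - lam)⁻¹ * h z) z‖ ^ p *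
            (1 - ‖z‖ ^ 2) ^ (p - 2) * (1 - ‖moebius a z‖ ^ 2) ^ s) ≤
          ENNReal.ofReal (K1 ^ p * 2 ^ p * 2) *
            (ENNReal.ofReal (‖deriv (fun w => f w * h w) z‖ ^ p *
              (1 - ‖z‖ ^ 2) ^ (p - 2) * (1 - ‖moebius a z‖ ^ 2) ^ s) +
             ENNReal.ofReal (‖deriv h z‖ ^ p *
              (1 - ‖z‖ ^ 2) ^ (p - 2) * (1 - ‖moebius a z‖ ^ 2) ^ s)) := by
        intro z hz
        have hhd : DifferentiableAt ℂ h z := hh.differentiableAt (Metric.isOpen_ball.mem_nhds hz)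
        have hX : ‖deriv (fun z => (f z - lam)⁻¹ * h z) z‖ ≤
            K1 * (‖deriv (fun w => f w * h w) z‖ + 1 * ‖deriv h z‖) := by
          have hd : deriv (fun z => (f z - lam)⁻¹ * h z) z =
              deriv (fun w => (f w - lam)⁻¹) z * h z + (f z - lam)⁻¹ * deriv h z :=
            deriv_mul (hgda z hz) hhd
          have k1 := key h hh z hz
          have hginv : ‖(f z - lam)⁻¹‖ ≤ δ⁻¹ := by
            rw [norm_inv]
            have h1 := hδf z hz
            have h2 : (0:ℝ) < ‖f z - lam‖ := lt_of_lt_of_le hδ0 h1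
            rw [inv_le_inv₀ h2 hδ0]
            exact h1
          have htri : ‖deriv (fun z => (f z - lam)⁻¹ * h z) z‖ ≤
              ‖deriv (fun w => (f w - lam)⁻¹) z * h z‖ + ‖(f z - lam)⁻¹‖ * ‖deriv h z‖ := by
            rw [hd]
            exact (norm_add_le _ _).trans (add_le_add le_rfl (norm_mul_le _ _))
          have hA : (0:ℝ) ≤ ‖deriv (fun w => f w * h w) z‖ := norm_nonneg _
          have hB : (0:ℝ) ≤ ‖deriv h z‖ := norm_nonneg _
          have hδi : (0:ℝ) < δ⁻¹ := by positivity
          nlinarith [mul_le_mul_of_nonneg_right hginv hB,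
            mul_nonneg (mul_nonneg hc0pos.le hMf0) hA, mul_nonneg hδi.le hA,
            mul_nonneg hc0pos.le hB]
        have hres := core_est hp (norm_nonneg (deriv (fun w => f w * h w) z))
          (norm_nonneg (deriv h z)) hK1pos.le zero_le_one
          (hw2 z hz) (hw3 a z ha' hz) (hw2 z hz) (hw3 a z ha' hz)
          hX (norm_nonneg _) (by linarith [hw2 z hz]) le_rfl
        simpa [Real.one_rpow] using hres
      calc (∫⁻ z in Metric.ball (0:ℂ) 1,
            ENNReal.ofReal (‖deriv (fun z => (f z - lam)⁻¹ * h z) z‖ ^ p *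
              (1 - ‖z‖ ^ 2) ^ (p - 2) * (1 - ‖moebius a z‖ ^ 2) ^ s))
          ≤ ∫⁻ z in Metric.ball (0:ℂ) 1,
              ENNReal.ofReal (K1 ^ p * 2 ^ p * 2) *
                (ENNReal.ofReal (‖deriv (fun w => f w * h w) z‖ ^ p *
                  (1 - ‖z‖ ^ 2) ^ (p - 2) * (1 - ‖moebius a z‖ ^ 2) ^ s) +
                 ENNReal.ofReal (‖deriv h z‖ ^ p *
                  (1 - ‖z‖ ^ 2) ^ (p - 2) * (1 - ‖moebius a z‖ ^ 2) ^ s)) :=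
            lintegral_mono_ae ((ae_restrict_mem measurableSet_ball).mono
              fun z hz => hcore z hz)
        _ = ENNReal.ofReal (K1 ^ p * 2 ^ p * 2) *
              ((∫⁻ z in Metric.ball (0:ℂ) 1,
                ENNReal.ofReal (‖deriv (fun w => f w * h w) z‖ ^ p *
                  (1 - ‖z‖ ^ 2) ^ (p - 2) * (1 - ‖moebius a z‖ ^ 2) ^ s)) +
               (∫⁻ z in Metric.ball (0:ℂ) 1,
                ENNReal.ofReal (‖deriv h z‖ ^ p *
                  (1 - ‖z‖ ^ 2) ^ (p - 2) * (1 - ‖moebius a z‖ ^ 2) ^ s))) := by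
            rw [lintegral_const_mul' _ _ ENNReal.ofReal_ne_top,
              lintegral_add_left (meas_integrand (fun w => f w * h w) a p s)]
        _ ≤ ENNReal.ofReal (K1 ^ p * 2 ^ p * 2) *
              (qSem p s (fun z => f z * h z) + qSem p s h) :=
            mul_le_mul' le_rfl (add_le_add (hle _ a ha') (hle _ a ha'))
    refine lt_of_le_of_lt hbound ?_
    exact ENNReal.mul_lt_top ENNReal.ofReal_lt_top (ENNReal.add_lt_top.mpr ⟨hfh, hq⟩)
  · -- Part 2: the quantitative estimate
    refine ⟨c0 ^ p * 2 ^ p * 2, by positivity, ?_⟩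
    intro h hh hq a ha
    have hcore : ∀ z ∈ Metric.ball (0:ℂ) 1,
        ENNReal.ofReal (‖deriv (fun w => (f w - lam)⁻¹) z * h z‖ ^ p *
          (1 - ‖z‖) ^ (p - 2) * (1 - ‖moebius a z‖) ^ s) ≤
        ENNReal.ofReal (c0 ^ p * 2 ^ p * 2) *
          (ENNReal.ofReal (‖deriv (fun w => f w * h w) z‖ ^ p *
            (1 - ‖z‖ ^ 2) ^ (p - 2) * (1 - ‖moebius a z‖ ^ 2) ^ s) +
           ENNReal.ofReal (Mf ^ p) *
           ENNReal.ofReal (‖deriv h z‖ ^ p *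
            (1 - ‖z‖ ^ 2) ^ (p - 2) * (1 - ‖moebius a z‖ ^ 2) ^ s)) := by
      intro z hz
      have hzlt : ‖z‖ < 1 := mem_ball_zero_iff.mp hz
      have hm : ‖moebius a z‖ < 1 := moebius_norm_lt_one ha hzlt
      exact core_est hp (norm_nonneg (deriv (fun w => f w * h w) z))
        (norm_nonneg (deriv h z)) hc0pos.le hMf0
        (Real.rpow_nonneg (by linarith [norm_nonneg z]) _)
        (Real.rpow_nonneg (by linarith [norm_nonneg (moebius a z)]) _)
        (hw2 z hz) (hw3 a z ha hz)
        (key h hh z hz) (norm_nonneg _)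
        (weight1 hp (norm_nonneg z) hzlt)
        (Real.rpow_le_rpow (by linarith [norm_nonneg (moebius a z)])
          (by nlinarith [norm_nonneg (moebius a z)]) hs0.le)
    calc (∫⁻ z in Metric.ball (0:ℂ) 1,
          ENNReal.ofReal (‖deriv (fun w => (f w - lam)⁻¹) z * h z‖ ^ p *
            (1 - ‖z‖) ^ (p - 2) * (1 - ‖moebius a z‖) ^ s))
        ≤ ∫⁻ z in Metric.ball (0:ℂ) 1,
            ENNReal.ofReal (c0 ^ p * 2 ^ p * 2) *
              (ENNReal.ofReal (‖deriv (fun w => f w * h w) z‖ ^ p *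
                (1 - ‖z‖ ^ 2) ^ (p - 2) * (1 - ‖moebius a z‖ ^ 2) ^ s) +
               ENNReal.ofReal (Mf ^ p) *
               ENNReal.ofReal (‖deriv h z‖ ^ p *
                (1 - ‖z‖ ^ 2) ^ (p - 2) * (1 - ‖moebius a z‖ ^ 2) ^ s)) :=
          lintegral_mono_ae ((ae_restrict_mem measurableSet_ball).mono
            fun z hz => hcore z hz)
      _ = ENNReal.ofReal (c0 ^ p * 2 ^ p * 2) *
            ((∫⁻ z in Metric.ball (0:ℂ) 1,
              ENNReal.ofReal (‖deriv (fun w => f w * h w) z‖ ^ p *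
                (1 - ‖z‖ ^ 2) ^ (p - 2) * (1 - ‖moebius a z‖ ^ 2) ^ s)) +
             ENNReal.ofReal (Mf ^ p) *
             (∫⁻ z in Metric.ball (0:ℂ) 1,
              ENNReal.ofReal (‖deriv h z‖ ^ p *
                (1 - ‖z‖ ^ 2) ^ (p - 2) * (1 - ‖moebius a z‖ ^ 2) ^ s))) := by
          rw [lintegral_const_mul' _ _ ENNReal.ofReal_ne_top,
            lintegral_add_left (meas_integrand (fun w => f w * h w) a p s),
            lintegral_const_mul' _ _ ENNReal.ofReal_ne_top]
      _ ≤ ENNReal.ofReal (c0 ^ p * 2 ^ p * 2) *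
            (qSem p s (fun z => f z * h z) + ENNReal.ofReal (Mf ^ p) * qSem p s h) :=
          mul_le_mul' le_rfl (add_le_add (hle _ a ha) (mul_le_mul' le_rfl (hle _ a ha)))
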